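/- There exists a constant C ≥ 1 such that the following holds. Let G = (V,E,w) be a connected weighted graph on n ≥ 2 vertices, let 0 < ε < 1/10, let m ≥ 0 be an integer with 2^m ≥ diam(G) (the maximum of d_G over pairs of vertices), and let V = N_{-1} ⊇ N_0 ⊇ ⋯ ⊇ N_m be sets such that each N_i (0 ≤ i ≤ m) is a 2^i-net of (V, d_G). Then there exists a subgraph H₀ of G with w(H₀) ≤ (C·(m+2)/ε)·w(MST(G)) such that for every vertex v ∈ V and every i with 0 ≤ i ≤ m, there exists x ∈ N_i with d_{H₀}(v,x) ≤ (1+2ε)·2^i. -/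

import Mathlib

open scoped ENNReal

/-! Let `T` be a minimum spanning tree, of weight `W`. At scale `2^i`, pick a maximal
`ε 2^i`-separated set `R_i` for the metric of `T` and join each `r ∈ R_i` by a shortest path of
`G` to a point of `N_i` at distance at most `2^i`. Every vertex is within `ε 2^i` of `R_i` in `T`,
hence within `(1 + ε) 2^i` of `N_i` in `H₀ := T ∪ (all these paths)`. The tree path leaving the
ball of radius `ε 2^i / 2` around `r ∈ R_i` spends weight at least `ε 2^i / 2` on edges touching
that ball; each endpoint of an edge lies in at most one of these balls, so when `|R_i| ≥ 2` every
edge is charged at most twice and `|R_i| ε 2^i ≤ 4W`. Hence the paths at scale `i` weigh at most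
`4W/ε` (a single path weighs at most `W`), and `w(H₀) ≤ W + (m + 1) 4W/ε`. -/

/-- The cost (total weight) of a walk in a graph, with edge weights `w`. -/
noncomputable def walkCost {V : Type*} {G : SimpleGraph V} (w : Sym2 V → ℝ) {u v : V}
    (p : G.Walk u v) : ℝ≥0∞ :=
  (p.edges.map (fun e => ENNReal.ofReal (w e))).sum

/-- Shortest-path distance in a weighted graph (`⊤` if no walk exists). -/
noncomputable def wdist {V : Type*} (G : SimpleGraph V) (w : Sym2 V → ℝ) (u v : V) : ℝ≥0∞ :=
  ⨅ p : G.Walk u v, walkCost w p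

/-- Total weight of (the edges of) a graph. -/
noncomputable def gweight {V : Type*} (w : Sym2 V → ℝ) (H : SimpleGraph V) : ℝ :=
  ∑ᶠ e ∈ H.edgeSet, w e

/-- `T` is a spanning tree of `G`. -/
def IsSpanningTree {V : Type*} (G T : SimpleGraph V) : Prop :=
  T ≤ G ∧ T.IsTree

/-- Weight of a minimum spanning tree of `G`. -/
noncomputable def mstWeight {V : Type*} (w : Sym2 V → ℝ) (G : SimpleGraph V) : ℝ :=
  sInf {x : ℝ | ∃ T : SimpleGraph V, IsSpanningTree G T ∧ x = gweight w T}

/-- Maximum edge weight on a walk. -/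
noncomputable def maxEdgeCost {V : Type*} {G : SimpleGraph V} (w : Sym2 V → ℝ) {u v : V}
    (p : G.Walk u v) : ℝ≥0∞ :=
  (p.edges.map (fun e => ENNReal.ofReal (w e))).foldr max 0

/-- `W(x,y)`: the minimum over all shortest `x`–`y` walks of the maximum edge weight on it. -/
noncomputable def Wlocal {V : Type*} (G : SimpleGraph V) (w : Sym2 V → ℝ) (x y : V) : ℝ≥0∞ :=
  ⨅ p : {p : G.Walk x y // walkCost w p = wdist G w x y}, maxEdgeCost w p.1

open SimpleGraph

section ListSums

variable {α : Type*} (f : α → ℝ≥0∞) {l : List α}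

theorem List.tsum_mem_eq_sum_map (hl : l.Nodup) : ∑' a : {a | a ∈ l}, f a = (l.map f).sum := by
  classical
  have hset : {a | a ∈ l} = (l.toFinset : Set α) := (List.coe_toFinset l).symm
  rw [hset, Finset.tsum_subtype', List.sum_toFinset f hl]

theorem List.tsum_mem_le_sum_map : ∑' a : {a | a ∈ l}, f a ≤ (l.map f).sum := by
  classical
  have hset : {a | a ∈ l} = {a | a ∈ l.dedup} := by simp only [List.mem_dedup]
  calc ∑' a : {a | a ∈ l}, f a = ∑' a : {a | a ∈ l.dedup}, f a := by rw [hset]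
    _ = (l.dedup.map f).sum := List.tsum_mem_eq_sum_map f l.nodup_dedup
    _ ≤ (l.map f).sum := (l.dedup_sublist.map f).sum_le_sum fun _ _ => zero_le

end ListSums

open Classical in
theorem sum_tsum_subtype_le_mul {ι α : Type*} (R : Finset ι) (E : ι → Set α) (S : Set α)
    (f : α → ℝ≥0∞) (k : ℕ) (hES : ∀ i ∈ R, E i ⊆ S) (hk : ∀ a, {i ∈ R | a ∈ E i}.card ≤ k) :
    ∑ i ∈ R, ∑' a : E i, f a ≤ k * ∑' a : S, f a := by
  rw [Finset.sum_congr rfl fun i _ => tsum_subtype (E i) f, tsum_subtype,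
    ← Summable.tsum_finsetSum fun _ _ => ENNReal.summable, ← ENNReal.tsum_mul_left]
  refine ENNReal.tsum_le_tsum fun a => ?_
  rw [Finset.sum_indicator_eq_sum_filter, Finset.sum_const, nsmul_eq_mul]
  by_cases ha : a ∈ S
  · rw [Set.indicator_of_mem ha]
    gcongr
    exact_mod_cast hk a
  · have hnone : {i ∈ R | a ∈ E i} = ∅ :=
      Finset.filter_eq_empty_iff.2 fun i hi hai => ha (hES i hi hai)
    simp [hnone]

theorem exists_finset_pairwise_forall_exists_not {α : Type*} [Finite α] {r : α → α → Prop}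
    [Std.Symm r] (hr : ∀ x, ¬ r x x) :
    ∃ R : Finset α, (R : Set α).Pairwise r ∧ ∀ x, ∃ y ∈ R, ¬ r x y := by
  classical
  obtain ⟨R, hR⟩ := (Set.toFinite {R : Finset α | (R : Set α).Pairwise r}).exists_maximal
    ⟨∅, by simp⟩
  refine ⟨R, hR.prop, fun x => ?_⟩
  by_contra! hx
  have hins : insert x R ∈ {R : Finset α | (R : Set α).Pairwise r} := by
    simpa [Set.pairwise_insert_of_symm] using ⟨hR.prop, fun y hy _ => hx y hy⟩
  exact hr x (hx x (hR.eq_of_ge hins (Finset.subset_insert x R) ▸ Finset.mem_insert_self x R))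

theorem ENNReal.two_mul_ofReal_half (x : ℝ) : 2 * ENNReal.ofReal (x / 2) = ENNReal.ofReal x := by
  rw [← ENNReal.ofReal_ofNat 2, ← ENNReal.ofReal_mul zero_le_two, mul_div_cancel₀ x two_ne_zero]

noncomputable def edgeCost {V : Type*} (w : Sym2 V → ℝ) (S : Set (Sym2 V)) : ℝ≥0∞ :=
  ∑' e : S, ENNReal.ofReal (w e)

theorem edgeCost_mono {V : Type*} {w : Sym2 V → ℝ} {S S' : Set (Sym2 V)} (h : S ⊆ S') :
    edgeCost w S ≤ edgeCost w S' :=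
  ENNReal.tsum_mono_subtype (fun e => ENNReal.ofReal (w e)) h

section Walks

variable {V : Type*} {G H : SimpleGraph V} {w : Sym2 V → ℝ} {u v x : V}

theorem walkCost_append (p : G.Walk u v) (q : G.Walk v x) :
    walkCost w (p.append q) = walkCost w p + walkCost w q := by
  simp [walkCost]

theorem walkCost_reverse (p : G.Walk u v) : walkCost w p.reverse = walkCost w p := by
  simp [walkCost, List.sum_reverse]

theorem walkCost_bypass_le [DecidableEq V] (p : G.Walk u v) : walkCost w p.bypass ≤ walkCost w p :=
  (p.edges_bypass_sublist_edges.map _).sum_le_sum fun _ _ => zero_le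

theorem edgeCost_edgeSet_le_walkCost (p : G.Walk u v) : edgeCost w p.edgeSet ≤ walkCost w p :=
  List.tsum_mem_le_sum_map _

theorem SimpleGraph.Walk.IsPath.walkCost_eq_edgeCost {p : G.Walk u v} (hp : p.IsPath) :
    walkCost w p = edgeCost w p.edgeSet :=
  (List.tsum_mem_eq_sum_map _ hp.isTrail.edges_nodup).symm

theorem wdist_le_walkCost (p : G.Walk u v) : wdist G w u v ≤ walkCost w p :=
  iInf_le _ p

theorem wdist_le_walkCost_of_forall_mem_edgeSet (p : G.Walk u v)
    (hp : ∀ e ∈ p.edges, e ∈ H.edgeSet) : wdist H w u v ≤ walkCost w p := by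
  simpa [walkCost, Walk.edges_transfer] using wdist_le_walkCost (w := w) (p.transfer H hp)

theorem wdist_anti (hGH : G ≤ H) : wdist H w u v ≤ wdist G w u v :=
  le_iInf fun p => wdist_le_walkCost_of_forall_mem_edgeSet p fun _ he =>
    edgeSet_mono hGH (p.edges_subset_edgeSet he)

theorem wdist_self : wdist G w u u = 0 :=
  nonpos_iff_eq_zero.1 <| by
    simpa [walkCost] using wdist_le_walkCost (w := w) (Walk.nil : G.Walk u u)

theorem wdist_comm : wdist G w u v = wdist G w v u := by
  refine le_antisymm ?_ ?_ <;>
  · refine le_iInf fun p => ?_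
    simpa [walkCost_reverse] using wdist_le_walkCost (w := w) p.reverse

theorem wdist_triangle : wdist G w u x ≤ wdist G w u v + wdist G w v x := by
  simp only [wdist, ENNReal.iInf_add, ENNReal.add_iInf]
  exact le_iInf₂ fun q p => walkCost_append p q ▸ iInf_le _ (p.append q)

theorem wdist_le_of_adj (h : G.Adj u v) : wdist G w u v ≤ ENNReal.ofReal (w s(u, v)) := by
  simpa [walkCost] using wdist_le_walkCost (w := w) (Walk.cons h Walk.nil)

theorem wdist_le_edgeCost (hG : G.Connected) : wdist G w u v ≤ edgeCost w G.edgeSet := by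
  classical
  let p := (hG.preconnected u v).some.bypass
  calc wdist G w u v ≤ walkCost w p := wdist_le_walkCost p
    _ = edgeCost w p.edgeSet := (Walk.bypass_isPath _).walkCost_eq_edgeCost
    _ ≤ edgeCost w G.edgeSet := edgeCost_mono fun _ he => p.edges_subset_edgeSet he

theorem exists_walkCost_eq_wdist [Finite V] (h : wdist G w u v ≠ ⊤) :
    ∃ p : G.Walk u v, walkCost w p = wdist G w u v := by
  classical
  have : Fintype V := Fintype.ofFinite V
  obtain ⟨q⟩ : Nonempty (G.Walk u v) := by
    by_contra hne
    exact h (by simp [wdist, not_nonempty_iff.1 hne])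
  have : Nonempty (G.Path u v) := ⟨⟨q.bypass, q.bypass_isPath⟩⟩
  obtain ⟨p, hp⟩ := exists_eq_ciInf_of_finite (f := fun p : G.Path u v => walkCost w p.1)
  refine ⟨p.1, le_antisymm ?_ (wdist_le_walkCost _)⟩
  rw [hp]
  exact le_iInf fun q => (ciInf_le (OrderBot.bddBelow _) ⟨q.bypass, q.bypass_isPath⟩).trans
    (walkCost_bypass_le q)

end Walks

section Packing

variable {V : Type*} {G : SimpleGraph V} {w : Sym2 V → ℝ}

def ballEdgeSet (G : SimpleGraph V) (w : Sym2 V → ℝ) (s : V) (D : ℝ≥0∞) : Set (Sym2 V) :=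
  {e | e ∈ G.edgeSet ∧ ∃ x ∈ e, wdist G w s x ≤ D}

theorem le_wdist_add_sum_ballEdgeSet {s : V} {D : ℝ≥0∞} {u v : V} (p : G.Walk u v)
    (hv : D < wdist G w s v) :
    D ≤ wdist G w s u +
      (p.edges.map ((ballEdgeSet G w s D).indicator fun e => ENNReal.ofReal (w e))).sum := by
  induction p with
  | nil => exact hv.le.trans le_self_add
  | @cons a b c hab q ih =>
    rw [Walk.edges_cons, List.map_cons, List.sum_cons]
    by_cases ha : wdist G w s a ≤ D
    · have hab' : s(a, b) ∈ ballEdgeSet G w s D := ⟨hab, a, Sym2.mem_mk_left a b, ha⟩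
      rw [Set.indicator_of_mem hab', ← add_assoc]
      calc D ≤ wdist G w s b + _ := ih hv
        _ ≤ _ := by gcongr; exact wdist_triangle.trans (by gcongr; exact wdist_le_of_adj hab)
    · exact (not_le.1 ha).le.trans le_self_add

theorem le_edgeCost_ballEdgeSet {s t : V} (hst : G.Reachable s t) {D : ℝ≥0∞}
    (ht : D < wdist G w s t) : D ≤ edgeCost w (ballEdgeSet G w s D) := by
  classical
  let p := hst.some.bypass
  let f := (ballEdgeSet G w s D).indicator fun e => ENNReal.ofReal (w e)
  calc D ≤ wdist G w s s + (p.edges.map f).sum := le_wdist_add_sum_ballEdgeSet p ht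
    _ = ∑' e : p.edgeSet, f e := by
      rw [wdist_self, zero_add]
      exact (List.tsum_mem_eq_sum_map f (Walk.bypass_isPath _).isTrail.edges_nodup).symm
    _ ≤ ∑' e, f e := (tsum_subtype _ _).trans_le (ENNReal.tsum_le_tsum (Set.indicator_le_self _ _))
    _ = edgeCost w (ballEdgeSet G w s D) := (tsum_subtype _ _).symm

theorem card_mul_le_two_mul_edgeCost (hG : G.Connected) {R : Finset V} (hR : 1 < R.card)
    {D : ℝ≥0∞} (hsep : (R : Set V).Pairwise fun u v => 2 * D < wdist G w u v) :
    R.card * D ≤ 2 * edgeCost w G.edgeSet := by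
  classical
  have hnear : ∀ x, {s ∈ R | wdist G w s x ≤ D}.card ≤ 1 := by
    refine fun x => Finset.card_le_one.2 fun s hs t ht => by_contra fun hst => ?_
    rw [Finset.mem_filter] at hs ht
    refine (hsep hs.1 ht.1 hst).not_ge ?_
    calc wdist G w s t ≤ wdist G w s x + wdist G w x t := wdist_triangle
      _ ≤ D + D := add_le_add hs.2 (wdist_comm (G := G) ▸ ht.2)
      _ = 2 * D := (two_mul D).symm
  have hcount : ∀ e, {s ∈ R | e ∈ ballEdgeSet G w s D}.card ≤ 2 := by
    intro e
    induction e using Sym2.ind with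
    | _ a b =>
      calc _ ≤ ({s ∈ R | wdist G w s a ≤ D} ∪ {s ∈ R | wdist G w s b ≤ D}).card := by
            refine Finset.card_le_card fun s hs => ?_
            simp only [ballEdgeSet, Finset.mem_filter, Set.mem_ofPred_eq, Sym2.mem_iff,
              exists_eq_or_imp, exists_eq_left] at hs
            simp only [Finset.mem_union, Finset.mem_filter]
            tauto
        _ ≤ 1 + 1 := (Finset.card_union_le _ _).trans (add_le_add (hnear a) (hnear b))
  calc R.card * D = ∑ s ∈ R, D := by rw [Finset.sum_const, nsmul_eq_mul]
    _ ≤ ∑ s ∈ R, edgeCost w (ballEdgeSet G w s D) := Finset.sum_le_sum fun s hs => by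
      obtain ⟨t, ht, hts⟩ := Finset.exists_mem_ne hR s
      refine le_edgeCost_ballEdgeSet (hG.preconnected s t) (lt_of_le_of_lt ?_ (hsep hs ht hts.symm))
      exact (two_mul D).symm ▸ le_self_add
    _ ≤ 2 * edgeCost w G.edgeSet := by
      exact_mod_cast sum_tsum_subtype_le_mul R (ballEdgeSet G w · D) G.edgeSet
        (fun e => ENNReal.ofReal (w e)) 2 (fun _ _ _ he => he.1) hcount

end Packing

section Construction

variable {V : Type*} {G T : SimpleGraph V} {w : Sym2 V → ℝ}

theorem sum_le_ofReal_div_mul_edgeCost (hT : T.Connected) {R : Finset V} {a ε : ℝ} (hε : 0 < ε)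
    (hε4 : ε ≤ 4) (hR : (R : Set V).Pairwise fun u v => ENNReal.ofReal (ε * a) < wdist T w u v)
    {f : V → ℝ≥0∞} (hfa : ∀ r ∈ R, f r ≤ ENNReal.ofReal a)
    (hfT : ∀ r ∈ R, f r ≤ edgeCost w T.edgeSet) :
    ∑ r ∈ R, f r ≤ ENNReal.ofReal (4 / ε) * edgeCost w T.edgeSet := by
  rcases le_or_gt R.card 1 with hR1 | hR1
  · calc ∑ r ∈ R, f r ≤ R.card • edgeCost w T.edgeSet := Finset.sum_le_card_nsmul _ _ _ hfT
      _ ≤ 1 • edgeCost w T.edgeSet := by gcongr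
      _ ≤ ENNReal.ofReal (4 / ε) * edgeCost w T.edgeSet := by
        rw [one_nsmul]
        refine le_mul_of_one_le_left' (ENNReal.one_le_ofReal.2 ?_)
        rwa [le_div_iff₀ hε, one_mul]
  · have hsep : (R : Set V).Pairwise fun u v =>
        2 * ENNReal.ofReal (ε * a / 2) < wdist T w u v := by
      simpa only [ENNReal.two_mul_ofReal_half] using hR
    calc ∑ r ∈ R, f r ≤ R.card • ENNReal.ofReal a := Finset.sum_le_card_nsmul _ _ _ hfa
      _ = R.card * ENNReal.ofReal (ε * a / 2) * ENNReal.ofReal (2 / ε) := by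
        rw [nsmul_eq_mul, mul_assoc, ← ENNReal.ofReal_mul' (by positivity)]
        field_simp
      _ ≤ 2 * edgeCost w T.edgeSet * ENNReal.ofReal (2 / ε) :=
        mul_le_mul_left (card_mul_le_two_mul_edgeCost hT hR1 hsep) _
      _ = ENNReal.ofReal (4 / ε) * edgeCost w T.edgeSet := by
        rw [mul_right_comm, mul_comm, ← ENNReal.two_mul_ofReal_half (4 / ε)]
        ring_nf

theorem exists_edgeSet_edgeCost_le_and_wdist_sup_le [Finite V] (hTG : T ≤ G) (hT : T.Connected)
    {a ε : ℝ} (ha : 0 ≤ a) (hε : 0 < ε) (hε4 : ε ≤ 4) {N : Set V}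
    (hN : ∀ x, ∃ y ∈ N, wdist G w x y ≤ ENNReal.ofReal a) :
    ∃ S ⊆ G.edgeSet, edgeCost w S ≤ ENNReal.ofReal (4 / ε) * edgeCost w T.edgeSet ∧
      ∀ v, ∃ x ∈ N, wdist (T ⊔ fromEdgeSet S) w v x ≤ ENNReal.ofReal ((1 + ε) * a) := by
  have : Std.Symm fun u v => ENNReal.ofReal (ε * a) < wdist T w u v :=
    ⟨fun u v h => wdist_comm (G := T) ▸ h⟩
  obtain ⟨R, hRsep, hRcov⟩ := exists_finset_pairwise_forall_exists_not
    (r := fun u v => ENNReal.ofReal (ε * a) < wdist T w u v) fun u => by simp [wdist_self]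
  choose y hyN hy using hN
  choose P hP using fun r =>
    exists_walkCost_eq_wdist (ne_top_of_le_ne_top ENNReal.ofReal_ne_top (hy r))
  set S := ⋃ r ∈ R, (P r).edgeSet
  refine ⟨S, Set.iUnion₂_subset fun r _ _ he => (P r).edges_subset_edgeSet he, ?_, fun v => ?_⟩
  · calc edgeCost w S ≤ ∑ r ∈ R, edgeCost w (P r).edgeSet :=
          ENNReal.tsum_biUnion_le (fun e => ENNReal.ofReal (w e)) _ _
      _ ≤ ∑ r ∈ R, wdist G w r (y r) :=
        Finset.sum_le_sum fun r _ => hP r ▸ edgeCost_edgeSet_le_walkCost (P r)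
      _ ≤ _ := sum_le_ofReal_div_mul_edgeCost hT hε hε4 hRsep (fun r _ => hy r)
        fun r _ => (wdist_anti hTG).trans (wdist_le_edgeCost hT)
  · obtain ⟨r, hr, hvr⟩ := hRcov v
    refine ⟨y r, hyN r, ?_⟩
    have hPS : ∀ e ∈ (P r).edges, e ∈ (T ⊔ fromEdgeSet S).edgeSet := fun e he => by
      rw [edgeSet_sup, edgeSet_fromEdgeSet]
      exact Or.inr ⟨Set.mem_biUnion hr he,
        G.not_isDiag_of_mem_edgeSet ((P r).edges_subset_edgeSet he)⟩
    calc wdist (T ⊔ fromEdgeSet S) w v (y r)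
        ≤ wdist (T ⊔ fromEdgeSet S) w v r + wdist (T ⊔ fromEdgeSet S) w r (y r) := wdist_triangle
      _ ≤ wdist T w v r + walkCost w (P r) :=
        add_le_add (wdist_anti le_sup_left) (wdist_le_walkCost_of_forall_mem_edgeSet _ hPS)
      _ ≤ ENNReal.ofReal (ε * a) + ENNReal.ofReal a :=
        add_le_add (not_lt.1 hvr) ((hP r).trans_le (hy r))
      _ = ENNReal.ofReal ((1 + ε) * a) := by
        rw [← ENNReal.ofReal_add (by positivity) ha]
        ring_nf

end Construction

theorem exists_isSpanningTree_gweight_eq_mstWeight {V : Type*} [Finite V] {G : SimpleGraph V}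
    (hG : G.Connected) (w : Sym2 V → ℝ) :
    ∃ T, IsSpanningTree G T ∧ gweight w T = mstWeight w G := by
  obtain ⟨T₀, hT₀G, hT₀⟩ := hG.exists_isTree_le
  have hfin : {x : ℝ | ∃ T, IsSpanningTree G T ∧ x = gweight w T}.Finite :=
    (Set.finite_range fun T : SimpleGraph V => gweight w T).subset <| by
      rintro _ ⟨T, _, rfl⟩
      exact ⟨T, rfl⟩
  obtain ⟨T, hT, hTw⟩ : mstWeight w G ∈ {x : ℝ | ∃ T, IsSpanningTree G T ∧ x = gweight w T} :=
    Set.Nonempty.csInf_mem ⟨_, T₀, ⟨hT₀G, hT₀⟩, rfl⟩ hfin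
  exact ⟨T, hT, hTw.symm⟩

theorem ofReal_gweight {V : Type*} [Finite V] {w : Sym2 V → ℝ} {H : SimpleGraph V}
    (hw : ∀ e ∈ H.edgeSet, 0 ≤ w e) : ENNReal.ofReal (gweight w H) = edgeCost w H.edgeSet := by
  have hfin := H.edgeSet.toFinite
  rw [gweight, finsum_mem_eq_finite_toFinset_sum _ hfin,
    ENNReal.ofReal_sum_of_nonneg fun e he => hw e (hfin.mem_toFinset.1 he), edgeCost,
    ← Finset.tsum_subtype', hfin.coe_toFinset]

theorem gweight_nonneg {V : Type*} {w : Sym2 V → ℝ} {H : SimpleGraph V}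
    (hw : ∀ e ∈ H.edgeSet, 0 ≤ w e) : 0 ≤ gweight w H :=
  finsum_nonneg fun e => finsum_nonneg (hw e)

theorem gweight_sup_fromEdgeSet_iUnion_le {V ι : Type*} [Finite V] [Fintype ι] {w : Sym2 V → ℝ}
    {T : SimpleGraph V} {S : ι → Set (Sym2 V)} {c : ℝ} (hc : 0 ≤ c)
    (hw : ∀ e ∈ (T ⊔ fromEdgeSet (⋃ i, S i)).edgeSet, 0 ≤ w e)
    (hS : ∀ i, edgeCost w (S i) ≤ ENNReal.ofReal c * edgeCost w T.edgeSet) :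
    gweight w (T ⊔ fromEdgeSet (⋃ i, S i)) ≤ (1 + Fintype.card ι * c) * gweight w T := by
  have hwT : ∀ e ∈ T.edgeSet, 0 ≤ w e := fun e he => hw e (edgeSet_mono le_sup_left he)
  rw [← ENNReal.ofReal_le_ofReal_iff (mul_nonneg (by positivity) (gweight_nonneg hwT)),
    ofReal_gweight hw, ENNReal.ofReal_mul (by positivity), ofReal_gweight hwT,
    ENNReal.ofReal_add zero_le_one (by positivity), ENNReal.ofReal_mul (Nat.cast_nonneg _),
    ENNReal.ofReal_natCast, ENNReal.ofReal_one]
  have hsub : (T ⊔ fromEdgeSet (⋃ i, S i)).edgeSet ⊆ T.edgeSet ∪ ⋃ i, S i := by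
    rw [edgeSet_sup, edgeSet_fromEdgeSet]
    exact Set.union_subset_union_right _ Set.sdiff_subset
  calc edgeCost w (T ⊔ fromEdgeSet (⋃ i, S i)).edgeSet
      ≤ edgeCost w T.edgeSet + edgeCost w (⋃ i, S i) :=
        (edgeCost_mono hsub).trans (ENNReal.tsum_union_le (fun e => ENNReal.ofReal (w e)) _ _)
    _ ≤ edgeCost w T.edgeSet + ∑ i, ENNReal.ofReal c * edgeCost w T.edgeSet :=
        add_le_add le_rfl ((ENNReal.tsum_iUnion_le (fun e => ENNReal.ofReal (w e)) S).trans
          (Finset.sum_le_sum fun i _ => hS i))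
    _ = (1 + Fintype.card ι * ENNReal.ofReal c) * edgeCost w T.edgeSet := by
        rw [Finset.sum_const, Finset.card_univ, nsmul_eq_mul]
        ring

/-- First phase of the construction: there is a constant `C ≥ 1` such that, given a connected
weighted graph `G` on `n ≥ 2` vertices, `0 < ε < 1/10`, `m` with `2^m ≥ diam(G)`, and a nested
hierarchy of `2^i`-nets `V = N_{-1} ⊇ N_0 ⊇ ⋯ ⊇ N_m`, there exists a subgraph `H₀` of weight
at most `(C·(m+2)/ε)·w(MST(G))` in which every vertex is within distance `(1+2ε)·2^i` of
some point of `N_i`, for every `0 ≤ i ≤ m`. -/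
theorem first_phase_representatives :
    ∃ C : ℝ, 1 ≤ C ∧
      ∀ (V : Type) [Fintype V], ∀ (G : SimpleGraph V) (w : Sym2 V → ℝ) (ε : ℝ) (m : ℕ)
        (N : ℕ → Set V),
        G.Connected → (∀ e ∈ G.edgeSet, 0 < w e) → 2 ≤ Fintype.card V →
        0 < ε → ε < 1 / 10 →
        (∀ x y : V, wdist G w x y ≤ ENNReal.ofReal ((2 : ℝ) ^ m)) →
        (∀ i, i < m → N (i + 1) ⊆ N i) →
        (∀ i, i ≤ m →
          (∀ u ∈ N i, ∀ v ∈ N i, u ≠ v → ENNReal.ofReal ((2 : ℝ) ^ i) < wdist G w u v) ∧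
          (∀ x : V, ∃ y ∈ N i, wdist G w x y ≤ ENNReal.ofReal ((2 : ℝ) ^ i))) →
        ∃ H : SimpleGraph V, H ≤ G ∧
          gweight w H ≤ C * ((m : ℝ) + 2) / ε * mstWeight w G ∧
          (∀ v : V, ∀ i, i ≤ m →
            ∃ x ∈ N i, wdist H w v x ≤ ENNReal.ofReal ((1 + 2 * ε) * 2 ^ i)) := by
  refine ⟨4, by norm_num, ?_⟩
  intro V _ G w ε m N hG hw _ hε hε10 _ _ hN
  obtain ⟨T, ⟨hTG, hT⟩, hTw⟩ := exists_isSpanningTree_gweight_eq_mstWeight hG w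
  choose S hSG hScost hSnear using fun i : Fin (m + 1) =>
    exists_edgeSet_edgeCost_le_and_wdist_sup_le hTG hT.connected (pow_nonneg zero_le_two (i : ℕ))
      hε (by linarith) (hN i i.is_le).2
  have hHG : T ⊔ fromEdgeSet (⋃ i, S i) ≤ G :=
    sup_le hTG ((fromEdgeSet_le _).2 (Set.sdiff_subset.trans (Set.iUnion_subset hSG)))
  have hwH : ∀ e ∈ (T ⊔ fromEdgeSet (⋃ i, S i)).edgeSet, 0 ≤ w e :=
    fun e he => (hw e (edgeSet_mono hHG he)).le
  refine ⟨T ⊔ fromEdgeSet (⋃ i, S i), hHG, ?_, fun v i hi => ?_⟩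
  · have hmst : 0 ≤ mstWeight w G :=
      hTw ▸ gweight_nonneg fun e he => hwH e (edgeSet_mono le_sup_left he)
    have hcoeff : 1 + ((m : ℝ) + 1) * (4 / ε) ≤ 4 * ((m : ℝ) + 2) / ε := by
      have : 1 ≤ 4 / ε := by rw [le_div_iff₀ hε]; linarith
      linarith [show 4 * ((m : ℝ) + 2) / ε = 4 / ε + (m + 1) * (4 / ε) by ring]
    calc gweight w (T ⊔ fromEdgeSet (⋃ i, S i))
        ≤ (1 + Fintype.card (Fin (m + 1)) * (4 / ε)) * gweight w T :=
          gweight_sup_fromEdgeSet_iUnion_le (by positivity) hwH hScost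
      _ ≤ 4 * ((m : ℝ) + 2) / ε * mstWeight w G := by
          rw [Fintype.card_fin, hTw, Nat.cast_succ]
          exact mul_le_mul_of_nonneg_right hcoeff hmst
  · obtain ⟨x, hx, hvx⟩ := hSnear ⟨i, Nat.lt_succ_of_le hi⟩ v
    refine ⟨x, hx, (wdist_anti (sup_le_sup_left (fromEdgeSet_mono (Set.subset_iUnion S _)) T)).trans
      (hvx.trans (ENNReal.ofReal_le_ofReal ?_))⟩
    gcongr
    linarith
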